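/- arXiv:1703.09523 — 2 statements merged into one kernel-verified Lean document; each statement's English description precedes it below -/
import Mathlib

section
/- Let L be a ℤ/2-Mackey functor consisting of abelian groups L(ℤ/2) and L(*), an involution w on L(ℤ/2), a restriction R: L(*) → L(ℤ/2) and transfer T: L(ℤ/2) → L(*) with R∘T(a) = a + w(a). Suppose L(ℤ/2) and L(*) are commutative rings, R is a ring map, and there is a multiplicative norm N: L(ℤ/2) → L(*) satisfying: (i) T(a)·b = T(a·R(b)), (ii) R(N(a)) = a·w(a), (iii) N(a+a') = N(a) + N(a') + T(a·w(a')) and N(0) = 0 (i.e., L is a Tambara functor). Define an action of L(ℤ/2) on L(*) by a•b := N(a)·b. Then this action makes L a Hermitian Mackey functor, i.e., it satisfies: (1) w(a·a') = w(a')·w(a) and w(1) = 1; (2) R(a•b) = a·R(b)·w(a); (3) a•T(c) = T(a·c·w(a)); (4) (a+a')•b = a•b + a'•b + T(a·R(b)·w(a')) and 0•b = 0. -/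
/-! Since `U` is commutative, the ring map `w` is anti-multiplicative. Each remaining axiom of a
Hermitian Mackey functor follows from a single Tambara axiom: restricting
`N a * b` uses that `R` is multiplicative and `R (N a) = a * w a`; `N a * T c` is Frobenius
reciprocity for `T`; and the distributivity law is the additivity formula for `N` multiplied
by `b`, again with Frobenius reciprocity. -/

theorem tambara_to_hermitian_general
    {U F : Type} [CommRing U] [CommRing F]
    (w : U →+* U)
    (R : F →+* U)
    (T : U →+ F)
    (N : U → F)
    (hNmul : ∀ a a' : U, N (a * a') = N a * N a')
    (hN1 : N 1 = 1)
    (hFrob : ∀ (a : U) (b : F), T a * b = T (a * R b))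
    (hRN : ∀ a : U, R (N a) = a * w a)
    (hNadd : ∀ a a' : U, N (a + a') = N a + N a' + T (a * w a'))
    (hN0 : N 0 = 0) :
    -- (1) w is an anti-involution of the ring U
    ((∀ a a' : U, w (a * a') = w a' * w a) ∧ w (1 : U) = 1) ∧
    -- (2) R(a • b) = a · R(b) · w(a)
    (∀ (a : U) (b : F), R (N a * b) = a * R b * w a) ∧
    -- (3) a • T(c) = T(a · c · w(a))
    (∀ a c : U, N a * T c = T (a * c * w a)) ∧
    -- (4) distributivity and 0 • b = 0
    ((∀ (a a' : U) (b : F),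
        N (a + a') * b = N a * b + N a' * b + T (a * R b * w a')) ∧
      ∀ b : F, N 0 * b = 0) ∧
    -- the action is multiplicative and unital
    (∀ (a a' : U) (b : F), N (a * a') * b = N a * (N a' * b)) ∧
    (∀ b : F, N 1 * b = b) := by
  refine ⟨⟨fun a a' => by rw [map_mul, mul_comm], map_one w⟩, ?_, ?_, ⟨?_, ?_⟩, ?_, ?_⟩
  · intro a b
    rw [map_mul, hRN]
    ring
  · intro a c
    rw [mul_comm, hFrob, hRN, mul_left_comm, mul_assoc]
  · intro a a' b
    rw [hNadd, add_mul, add_mul, hFrob, mul_right_comm a]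
  · intro b
    rw [hN0, zero_mul]
  · intro a a' b
    rw [hNmul, mul_assoc]
  · intro b
    rw [hN1, one_mul]

/-- A ℤ/2-Tambara functor, with the action `a • b := N a * b`,
is a Hermitian Mackey functor. -/
theorem tambara_to_hermitian
    {U F : Type} [CommRing U] [CommRing F]
    (w : U →+* U) (hw2 : ∀ a : U, w (w a) = a)
    (R : F →+* U) (hRw : ∀ b : F, w (R b) = R b)
    (T : U →+ F) (hTw : ∀ a : U, T (w a) = T a)
    (hRT : ∀ a : U, R (T a) = a + w a)
    (N : U → F)
    (hNw : ∀ a : U, N (w a) = N a)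
    (hNmul : ∀ a a' : U, N (a * a') = N a * N a')
    (hN1 : N 1 = 1)
    (hFrob : ∀ (a : U) (b : F), T a * b = T (a * R b))
    (hRN : ∀ a : U, R (N a) = a * w a)
    (hNadd : ∀ a a' : U, N (a + a') = N a + N a' + T (a * w a'))
    (hN0 : N 0 = 0) :
    -- (1) w is an anti-involution of the ring U
    ((∀ a a' : U, w (a * a') = w a' * w a) ∧ w (1 : U) = 1) ∧
    -- (2) R(a • b) = a · R(b) · w(a)
    (∀ (a : U) (b : F), R (N a * b) = a * R b * w a) ∧
    -- (3) a • T(c) = T(a · c · w(a))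
    (∀ a c : U, N a * T c = T (a * c * w a)) ∧
    -- (4) distributivity and 0 • b = 0
    ((∀ (a a' : U) (b : F),
        N (a + a') * b = N a * b + N a' * b + T (a * R b * w a')) ∧
      ∀ b : F, N 0 * b = 0) ∧
    -- the action is multiplicative and unital
    (∀ (a a' : U) (b : F), N (a * a') * b = N a * (N a' * b)) ∧
    (∀ b : F, N 1 * b = b) :=
  tambara_to_hermitian_general w R T N hNmul hN1 hFrob hRN hNadd hN0
end

section
/- Let L be a Hermitian Mackey functor. The action of Mₙ(L(ℤ/2)) on Mₙ(L)(*) defined by (A•B)ᵢⱼ = (A·R(B)·w(A))ᵢⱼ for i<j and (A•B)ᵢᵢ = T(Σ_{k<l} Aᵢₖ R(B)ₖₗ w(Aᵢₗ)) + Σₖ Aᵢₖ•Bₖₖ is associative: (AC)•B = A•(C•B) for all A, C ∈ Mₙ(L(ℤ/2)) and B ∈ Mₙ(L)(*). -/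
/-- A Hermitian ℤ/2-Mackey functor: a ring `U = L(ℤ/2)` with anti-involution `w`,
an abelian group `F = L(*)`, restriction `R`, transfer `T` with `R (T a) = a + w a`,
and a multiplicative left action `act` of `U` on `F`. -/
structure HermitianMackey (U F : Type) [Ring U] [AddCommGroup F] where
  w : U → U
  w_add : ∀ a a' : U, w (a + a') = w a + w a'
  w_invol : ∀ a : U, w (w a) = a
  w_mul : ∀ a a' : U, w (a * a') = w a' * w a
  w_one : w 1 = 1
  R : F → U
  R_add : ∀ b b' : F, R (b + b') = R b + R b'
  R_equiv : ∀ b : F, w (R b) = R b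
  T : U → F
  T_add : ∀ a a' : U, T (a + a') = T a + T a'
  T_equiv : ∀ a : U, T (w a) = T a
  RT : ∀ a : U, R (T a) = a + w a
  act : U → F → F
  act_add : ∀ (a : U) (b b' : F), act a (b + b') = act a b + act a b'
  act_mul : ∀ (a a' : U) (b : F), act (a * a') b = act a (act a' b)
  act_one : ∀ b : F, act 1 b = b
  R_act : ∀ (a : U) (b : F), R (act a b) = a * R b * w a
  act_T : ∀ a c : U, act a (T c) = T (a * c * w a)
  add_act : ∀ (a a' : U) (b : F),
    act (a + a') b = act a b + act a' b + T (a * R b * w a')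
  zero_act : ∀ b : F, act 0 b = 0

variable {U F : Type} [Ring U] [AddCommGroup F]

/-- The conjugate transpose `w(A)ᵢⱼ = w(Aⱼᵢ)`, the anti-involution of `Mₙ(L)(ℤ/2)`. -/
def conjT (L : HermitianMackey U F) {n : ℕ} (A : Matrix (Fin n) (Fin n) U) :
    Matrix (Fin n) (Fin n) U :=
  Matrix.of fun i j => L.w (A j i)

/-- The restriction `R : Mₙ(L)(*) → Mₙ(L(ℤ/2))`. An element of `Mₙ(L)(*)` is
recorded as a pair `(Boff, Bdiag)`: the entries `Boff i j` for `i < j` lie in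
`L(ℤ/2)` and the diagonal entries `Bdiag i` lie in `L(*)`; the restriction fills
in the lower entries via the involution `w`. -/
def mRest (L : HermitianMackey U F) {n : ℕ}
    (Boff : Fin n → Fin n → U) (Bdiag : Fin n → F) :
    Matrix (Fin n) (Fin n) U :=
  Matrix.of fun i j =>
    if i < j then Boff i j else if j < i then L.w (Boff j i) else L.R (Bdiag i)

/-- Off-diagonal part of the matrix transfer `T : Mₙ(L(ℤ/2)) → Mₙ(L)(*)`:
`T(A)ᵢⱼ = Aᵢⱼ + w(Aⱼᵢ)` for `i < j`. -/
def mTransOff (L : HermitianMackey U F) {n : ℕ} (A : Matrix (Fin n) (Fin n) U) :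
    Fin n → Fin n → U :=
  fun i j => A i j + L.w (A j i)

/-- Diagonal part of the matrix transfer: `T(A)ᵢᵢ = T(Aᵢᵢ)`. -/
def mTransDiag (L : HermitianMackey U F) {n : ℕ} (A : Matrix (Fin n) (Fin n) U) :
    Fin n → F :=
  fun i => L.T (A i i)

/-- Off-diagonal part of the action of `Mₙ(L(ℤ/2))` on `Mₙ(L)(*)`:
`(A • B)ᵢⱼ = (A · R(B) · w(A))ᵢⱼ` for `i < j`. -/
def mActOff (L : HermitianMackey U F) {n : ℕ} (A : Matrix (Fin n) (Fin n) U)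
    (Boff : Fin n → Fin n → U) (Bdiag : Fin n → F) : Fin n → Fin n → U :=
  fun i j => (A * mRest L Boff Bdiag * conjT L A) i j

/-- Diagonal part of the action of `Mₙ(L(ℤ/2))` on `Mₙ(L)(*)`:
`(A • B)ᵢᵢ = T(Σ_{k<l} Aᵢₖ · R(B)ₖₗ · w(Aᵢₗ)) + Σₖ Aᵢₖ • Bₖₖ`. -/
def mActDiag (L : HermitianMackey U F) {n : ℕ} (A : Matrix (Fin n) (Fin n) U)
    (Boff : Fin n → Fin n → U) (Bdiag : Fin n → F) : Fin n → F :=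
  fun i =>
    (∑ k : Fin n, ∑ l : Fin n,
        if k < l then L.T (A i k * mRest L Boff Bdiag k l * L.w (A i l)) else 0)
      + ∑ k : Fin n, L.act (A i k) (Bdiag k)

/-!
Let `M = R(B)` and, for a row vector `x`, let `x • B ∈ L(*)` be the action of `x` regarded as a
`1 × n` matrix, so that `(A • B)ᵢᵢ = Aᵢ • B` for the rows `Aᵢ` of `A`. The map `x ↦ x • B` is
quadratic with polarisation `T(x M w(y))`, and `(u x) • B = u • (x • B)` for scalars `u`. The row
`(A C)ᵢ = Σₐ Aᵢₐ Cₐ` is a sum, so generalised distributivity gives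
`(A C)ᵢ • B = Σₐ Aᵢₐ • (Cₐ • B) + Σ_{a<d} T(Aᵢₐ (C M w(C))_{ad} w(A_{id}))`, and this is
`(A • (C • B))ᵢᵢ` because the restriction of `C • B` is `C M w(C)`. Off the diagonal the claim
is associativity of the matrix product.
-/

open Finset

theorem map_sum_of_map_add {V W ι : Type*} [AddCommMonoid V] [AddCommMonoid W] [LinearOrder ι]
    {Q : V → W} (β : V → V →+ W) (h0 : Q 0 = 0) (hadd : ∀ x y, Q (x + y) = Q x + Q y + β x y)
    (s : Finset ι) (f : ι → V) :
    Q (∑ i ∈ s, f i) = ∑ i ∈ s, Q (f i) + ∑ k ∈ s, ∑ l ∈ s, if k < l then β (f k) (f l) else 0 := by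
  induction s using Finset.induction_on_min with
  | empty => simp [h0]
  | insert a s ha ih =>
    have has : a ∉ s := fun h => lt_irrefl a (ha a h)
    have hrow : ∀ k ∈ s, (∑ l ∈ insert a s, if k < l then β (f k) (f l) else 0)
        = ∑ l ∈ s, if k < l then β (f k) (f l) else 0 := fun k hk => by
      rw [sum_insert has, if_neg (ha k hk).not_gt, zero_add]
    rw [sum_insert has, hadd, ih, map_sum (β (f a)), sum_insert has, sum_insert has,
      sum_insert has, sum_congr rfl hrow, if_neg (lt_irrefl a),
      sum_congr rfl fun l hl => if_pos (ha l hl)]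
    abel

theorem sum_sum_eq_sum_lt_add_sum_diag {ι M : Type*} [Fintype ι] [LinearOrder ι]
    [AddCommMonoid M] (t : ι → ι → M) :
    ∑ k, ∑ l, t k l = ∑ k, ∑ l, (if k < l then t k l + t l k else 0) + ∑ k, t k k := by
  have hsplit : ∀ k l, t k l = (if k < l then t k l else 0) + (if l < k then t k l else 0)
      + if k = l then t k l else 0 := by
    intro k l
    rcases lt_trichotomy k l with h | rfl | h
    · simp [h, h.not_gt, h.ne]
    · simp
    · simp [h, h.not_gt, h.ne']
  have hswap : ∑ k, ∑ l, (if l < k then t k l else 0) = ∑ k, ∑ l, if k < l then t l k else 0 :=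
    sum_comm
  conv_lhs => rw [sum_congr rfl fun k _ => sum_congr rfl fun l _ => hsplit k l]
  simp only [sum_add_distrib, ite_add_zero, hswap, sum_ite_eq, mem_univ, if_true]

namespace HermitianMackey

variable (L : HermitianMackey U F)

def wHom : U →+ U := AddMonoidHom.mk' L.w L.w_add
def RHom : F →+ U := AddMonoidHom.mk' L.R L.R_add
def THom : U →+ F := AddMonoidHom.mk' L.T L.T_add
def actHom (a : U) : F →+ F := AddMonoidHom.mk' (L.act a) (L.act_add a)

theorem w_sum {ι : Type*} (s : Finset ι) (f : ι → U) : L.w (∑ i ∈ s, f i) = ∑ i ∈ s, L.w (f i) :=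
  map_sum L.wHom f s

theorem R_sum {ι : Type*} (s : Finset ι) (f : ι → F) : L.R (∑ i ∈ s, f i) = ∑ i ∈ s, L.R (f i) :=
  map_sum L.RHom f s

theorem T_sum {ι : Type*} (s : Finset ι) (f : ι → U) : L.T (∑ i ∈ s, f i) = ∑ i ∈ s, L.T (f i) :=
  map_sum L.THom f s

theorem act_sum {ι : Type*} (a : U) (s : Finset ι) (f : ι → F) :
    L.act a (∑ i ∈ s, f i) = ∑ i ∈ s, L.act a (f i) :=
  map_sum (L.actHom a) f s

theorem R_zero : L.R 0 = 0 := map_zero L.RHom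

theorem T_zero : L.T 0 = 0 := map_zero L.THom

theorem act_zero (a : U) : L.act a 0 = 0 := map_zero (L.actHom a)

theorem w_mul_mul_w (u x v : U) : L.w (u * x * L.w v) = v * L.w x * L.w u := by
  rw [L.w_mul, L.w_mul, L.w_invol, mul_assoc]

end HermitianMackey

section Matrices

variable (L : HermitianMackey U F) {n : ℕ}

def sesq {ι : Type*} [Fintype ι] (M : Matrix ι ι U) (x y : ι → U) : U :=
  ∑ k, ∑ l, x k * M k l * L.w (y l)

theorem sesq_smul {ι : Type*} [Fintype ι] (M : Matrix ι ι U) (u v : U) (x y : ι → U) :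
    sesq L M (u • x) (v • y) = u * sesq L M x y * L.w v := by
  simp only [sesq, Pi.smul_apply, smul_eq_mul, L.w_mul, mul_sum, sum_mul, mul_assoc]

theorem sesq_add_right {ι : Type*} [Fintype ι] (M : Matrix ι ι U) (x y z : ι → U) :
    sesq L M x (y + z) = sesq L M x y + sesq L M x z := by
  simp only [sesq, Pi.add_apply, L.w_add, mul_add, sum_add_distrib]

theorem w_sesq {ι : Type*} [Fintype ι] {M : Matrix ι ι U} (hM : ∀ k l, L.w (M k l) = M l k)
    (x y : ι → U) : L.w (sesq L M x y) = sesq L M y x := by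
  simp only [sesq, L.w_sum, L.w_mul_mul_w, hM]
  exact sum_comm

theorem conjT_mul (A B : Matrix (Fin n) (Fin n) U) : conjT L (A * B) = conjT L B * conjT L A := by
  ext i j
  simp only [conjT, Matrix.of_apply, Matrix.mul_apply, L.w_sum, L.w_mul]

theorem mul_mul_conjT_apply (A M : Matrix (Fin n) (Fin n) U) (i j : Fin n) :
    (A * M * conjT L A) i j = sesq L M (A i) (A j) := by
  simp only [Matrix.mul_apply, sum_mul, sesq, conjT, Matrix.of_apply]
  exact sum_comm

variable (Boff : Fin n → Fin n → U) (Bdiag : Fin n → F)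

theorem mRest_of_lt {i j : Fin n} (h : i < j) : mRest L Boff Bdiag i j = Boff i j := by
  simp [mRest, h]

theorem mRest_of_gt {i j : Fin n} (h : j < i) : mRest L Boff Bdiag i j = L.w (Boff j i) := by
  simp [mRest, h, h.not_gt]

theorem mRest_self (i : Fin n) : mRest L Boff Bdiag i i = L.R (Bdiag i) := by
  simp [mRest]

theorem w_mRest (k l : Fin n) : L.w (mRest L Boff Bdiag k l) = mRest L Boff Bdiag l k := by
  rcases lt_trichotomy k l with h | rfl | h
  · rw [mRest_of_lt L Boff Bdiag h, mRest_of_gt L Boff Bdiag h]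
  · rw [mRest_self, L.R_equiv]
  · rw [mRest_of_gt L Boff Bdiag h, mRest_of_lt L Boff Bdiag h, L.w_invol]

end Matrices

section RowAction

variable (L : HermitianMackey U F) {n : ℕ} (Boff : Fin n → Fin n → U) (Bdiag : Fin n → F)

/-- `x • B` for the row vector `x` regarded as a `1 × n` matrix. -/
def rowAct (x : Fin n → U) : F :=
  (∑ k, ∑ l, if k < l then L.T (x k * mRest L Boff Bdiag k l * L.w (x l)) else 0)
    + ∑ k, L.act (x k) (Bdiag k)

theorem R_rowAct (x : Fin n → U) :
    L.R (rowAct L Boff Bdiag x) = sesq L (mRest L Boff Bdiag) x x := by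
  rw [sesq, sum_sum_eq_sum_lt_add_sum_diag]
  simp only [rowAct, L.R_add, L.R_sum, apply_ite L.R, L.R_zero, L.RT, L.R_act, L.w_mul_mul_w,
    w_mRest, mRest_self]

theorem mRest_mActOff_mActDiag (A : Matrix (Fin n) (Fin n) U) :
    mRest L (mActOff L A Boff Bdiag) (mActDiag L A Boff Bdiag)
      = A * mRest L Boff Bdiag * conjT L A := by
  ext i j
  rcases lt_trichotomy i j with h | rfl | h
  · exact mRest_of_lt L _ _ h
  · rw [mRest_self, mul_mul_conjT_apply]
    exact R_rowAct L Boff Bdiag (A i)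
  · rw [mRest_of_gt L _ _ h, mActOff, mul_mul_conjT_apply, mul_mul_conjT_apply,
      w_sesq L (w_mRest L Boff Bdiag)]

theorem rowAct_zero : rowAct L Boff Bdiag 0 = 0 := by
  simp only [rowAct, Pi.zero_apply, zero_mul, L.T_zero, L.zero_act, ite_self, sum_const_zero,
    add_zero]

theorem rowAct_smul (u : U) (x : Fin n → U) :
    rowAct L Boff Bdiag (u • x) = L.act u (rowAct L Boff Bdiag x) := by
  simp only [rowAct, L.act_add, L.act_sum, apply_ite (L.act u), L.act_zero, L.act_T, L.act_mul,
    Pi.smul_apply, smul_eq_mul, L.w_mul, mul_assoc]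

theorem rowAct_add (x y : Fin n → U) :
    rowAct L Boff Bdiag (x + y)
      = rowAct L Boff Bdiag x + rowAct L Boff Bdiag y
        + L.T (sesq L (mRest L Boff Bdiag) x y) := by
  have hpair : ∀ k l, L.T ((x k + y k) * mRest L Boff Bdiag k l * L.w (x l + y l))
      = L.T (x k * mRest L Boff Bdiag k l * L.w (x l))
        + L.T (y k * mRest L Boff Bdiag k l * L.w (y l))
        + (L.T (x k * mRest L Boff Bdiag k l * L.w (y l))
          + L.T (x l * mRest L Boff Bdiag l k * L.w (y k))) := by
    intro k l
    -- `T ∘ w = T` turns the cross term `T(y k M k l w(x l))` into `T(x l M l k w(y k))`.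
    rw [← w_mRest L Boff Bdiag k l, ← L.w_mul_mul_w, L.T_equiv, L.w_add]
    simp only [add_mul, mul_add, L.T_add]
    abel
  have hdiag : ∀ k, L.act (x k + y k) (Bdiag k)
      = L.act (x k) (Bdiag k) + L.act (y k) (Bdiag k)
        + L.T (x k * mRest L Boff Bdiag k k * L.w (y k)) := by
    intro k
    rw [L.add_act, mRest_self]
  simp only [rowAct, sesq, L.T_sum]
  rw [sum_sum_eq_sum_lt_add_sum_diag fun k l => L.T (x k * mRest L Boff Bdiag k l * L.w (y l))]
  simp only [Pi.add_apply, hpair, hdiag, ite_add_zero, sum_add_distrib]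
  abel

theorem rowAct_sum {ι : Type*} [LinearOrder ι] (s : Finset ι) (f : ι → Fin n → U) :
    rowAct L Boff Bdiag (∑ a ∈ s, f a)
      = ∑ a ∈ s, rowAct L Boff Bdiag (f a)
        + ∑ a ∈ s, ∑ d ∈ s,
            if a < d then L.T (sesq L (mRest L Boff Bdiag) (f a) (f d)) else 0 :=
  map_sum_of_map_add
    (fun x => AddMonoidHom.mk' (fun y => L.T (sesq L (mRest L Boff Bdiag) x y))
      fun y z => by rw [sesq_add_right, L.T_add])
    (rowAct_zero L Boff Bdiag) (rowAct_add L Boff Bdiag) s f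

end RowAction

/-- the action of `Mₙ(L(ℤ/2))` on `Mₙ(L)(*)` is associative:
`(A·C) • B = A • (C • B)`. -/
theorem matrix_action_assoc {U F : Type} [Ring U] [AddCommGroup F]
    (L : HermitianMackey U F) (n : ℕ)
    (A C : Matrix (Fin n) (Fin n) U)
    (Boff : Fin n → Fin n → U) (Bdiag : Fin n → F) :
    (∀ i j : Fin n, i < j →
        mActOff L (A * C) Boff Bdiag i j =
          mActOff L A (mActOff L C Boff Bdiag) (mActDiag L C Boff Bdiag) i j) ∧
    (∀ i : Fin n,
        mActDiag L (A * C) Boff Bdiag i =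
          mActDiag L A (mActOff L C Boff Bdiag) (mActDiag L C Boff Bdiag) i) := by
  have hrest := mRest_mActOff_mActDiag L Boff Bdiag C
  refine ⟨fun i j _ => ?_, fun i => ?_⟩
  · simp only [mActOff, hrest, conjT_mul, Matrix.mul_assoc]
  · have hrow : (A * C) i = ∑ a, A i a • C a := by
      ext k
      simp [Matrix.mul_apply, Finset.sum_apply]
    calc mActDiag L (A * C) Boff Bdiag i = rowAct L Boff Bdiag (∑ a, A i a • C a) := by
          rw [← hrow]; rfl
      _ = ∑ a, L.act (A i a) (rowAct L Boff Bdiag (C a))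
          + ∑ a, ∑ d, if a < d then
              L.T (A i a * sesq L (mRest L Boff Bdiag) (C a) (C d) * L.w (A i d)) else 0 := by
          simp only [rowAct_sum, rowAct_smul, sesq_smul]
      _ = mActDiag L A (mActOff L C Boff Bdiag) (mActDiag L C Boff Bdiag) i := by
          simp only [mActDiag, hrest, mul_mul_conjT_apply]
          exact add_comm _ _
end
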